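/- Let H⁺ be a nonnegative random variable with Laplace-Stieltjes transform f(s) = E[e^{-sH⁺}], and let λ > 0, λ⁺ > 0 with λ⁺·E[H⁺] < 1. Then the equation x - λ - λ⁺ + λ⁺·f(x) = 0 has a unique solution γ in the interval [λ, λ + λ⁺]. -/

import Mathlib

open MeasureTheory Filter Set Topology

/-! `g x = x - λ - λ⁺ + λ⁺ f x` is continuous on `[λ, λ + λ⁺]`, with `g λ ≤ 0` because `f ≤ 1` and
`g (λ + λ⁺) ≥ 0` because `f ≥ 0`. From `e^{-xh} - e^{-yh} ≤ (y - x) h` for `0 ≤ x ≤ y`, `h ≥ 0`, the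
transform `f` decreases with slope at most `E[H⁺]` on `[0, ∞)`, so `g` increases with slope at least
`1 - λ⁺ E[H⁺] > 0`; the intermediate value theorem and strict monotonicity give the unique zero.
The transform is handled as `f x = mgf H⁺ μ (-x)`. -/

open ProbabilityTheory Real

theorem Real.exp_mul_sub_exp_mul_le {x s t : ℝ} (hx : 0 ≤ x) (hst : s ≤ t) (ht : t ≤ 0) :
    exp (t * x) - exp (s * x) ≤ (t - s) * x := by
  have hsplit : exp (s * x) = exp (t * x) * exp (-((t - s) * x)) := by
    rw [← exp_add]; ring_nf
  have hlin := add_one_le_exp (-((t - s) * x))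
  have hle_one : exp (t * x) ≤ 1 := exp_le_one_iff.mpr (mul_nonpos_of_nonpos_of_nonneg ht hx)
  have hgap : 0 ≤ (t - s) * x := mul_nonneg (sub_nonneg.mpr hst) hx
  nlinarith [exp_pos (t * x)]

theorem StrictMonoOn.existsUnique_eq_of_mem_Icc {α δ : Type*}
    [ConditionallyCompleteLinearOrder α] [TopologicalSpace α] [OrderTopology α] [DenselyOrdered α]
    [LinearOrder δ] [TopologicalSpace δ] [OrderClosedTopology δ] {g : α → δ} {a b : α} {c : δ}
    (hab : a ≤ b) (hg : StrictMonoOn g (Icc a b)) (hcont : ContinuousOn g (Icc a b))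
    (hc : c ∈ Icc (g a) (g b)) :
    ∃! x, x ∈ Icc a b ∧ g x = c := by
  obtain ⟨x, hx, hgx⟩ := intermediate_value_Icc hab hcont hc
  exact ⟨x, ⟨hx, hgx⟩, fun y ⟨hy, hgy⟩ ↦ hg.injOn hy hx (hgy.trans hgx.symm)⟩

namespace ProbabilityTheory

variable {Ω : Type*} [MeasurableSpace Ω] {μ : Measure Ω} {X : Ω → ℝ} {s t : ℝ}

lemma integrable_exp_mul_of_nonpos [IsFiniteMeasure μ] (hX : AEMeasurable X μ)
    (hX0 : 0 ≤ᵐ[μ] X) (ht : t ≤ 0) : Integrable (fun ω ↦ exp (t * X ω)) μ := by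
  refine .of_mem_Icc 0 1 (measurable_exp.comp_aemeasurable (hX.const_mul t)) ?_
  filter_upwards [hX0] with ω hω
  exact ⟨(exp_pos _).le, exp_le_one_iff.mpr (mul_nonpos_of_nonpos_of_nonneg ht hω)⟩

lemma mgf_le_one_of_nonpos [IsProbabilityMeasure μ] (hX0 : 0 ≤ᵐ[μ] X) (ht : t ≤ 0) :
    mgf X μ t ≤ 1 := by
  simpa [mgf_zero_fun] using mgf_anti_of_nonpos hX0 ht (by simp)

lemma mgf_sub_mgf_le_mul_integral [IsFiniteMeasure μ] (hX : Integrable X μ) (hX0 : 0 ≤ᵐ[μ] X)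
    (hst : s ≤ t) (ht : t ≤ 0) : mgf X μ t - mgf X μ s ≤ (t - s) * ∫ ω, X ω ∂μ := by
  have hint := fun r (hr : r ≤ 0) ↦ integrable_exp_mul_of_nonpos hX.aemeasurable hX0 hr
  rw [mgf, mgf, ← integral_sub (hint t ht) (hint s (hst.trans ht)), ← integral_const_mul]
  refine integral_mono_ae ((hint t ht).sub (hint s (hst.trans ht))) (hX.const_mul _) ?_
  filter_upwards [hX0] with ω hω
  exact Real.exp_mul_sub_exp_mul_le hω hst ht

lemma continuousOn_mgf_Iic [IsFiniteMeasure μ] (hX : AEMeasurable X μ) (hX0 : 0 ≤ᵐ[μ] X) :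
    ContinuousOn (mgf X μ) (Iic 0) := by
  refine continuousOn_of_dominated (bound := fun _ ↦ 1)
    (fun t ht ↦ (integrable_exp_mul_of_nonpos hX hX0 ht).aestronglyMeasurable) (fun t ht ↦ ?_)
    (integrable_const 1) (ae_of_all _ fun ω ↦ by fun_prop)
  filter_upwards [hX0] with ω hω
  rw [norm_of_nonneg (exp_pos _).le]
  exact exp_le_one_iff.mpr (mul_nonpos_of_nonpos_of_nonneg ht hω)

lemma strictMonoOn_add_mul_mgf_neg [IsFiniteMeasure μ] (hX : Integrable X μ) (hX0 : 0 ≤ᵐ[μ] X)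
    {c : ℝ} (hc : 0 ≤ c) (hcX : c * ∫ ω, X ω ∂μ < 1) :
    StrictMonoOn (fun x ↦ x + c * mgf X μ (-x)) (Ici 0) := by
  intro x hx y _ hxy
  have hdecay : mgf X μ (-x) - mgf X μ (-y) ≤ (y - x) * ∫ ω, X ω ∂μ := by
    simpa [neg_add_eq_sub] using
      mgf_sub_mgf_le_mul_integral hX hX0 (neg_le_neg hxy.le) (neg_nonpos.mpr hx)
  have hslope : c * ((y - x) * ∫ ω, X ω ∂μ) < y - x := by
    nlinarith [sub_pos.mpr hxy]
  nlinarith [mul_le_mul_of_nonneg_left hdecay hc]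

end ProbabilityTheory

theorem stmt2_general {Ω : Type*} [MeasurableSpace Ω] (μ : Measure Ω) [IsProbabilityMeasure μ]
    (Hp : Ω → ℝ) (hHpNonneg : ∀ ω, 0 ≤ Hp ω)
    (hHpInt : Integrable Hp μ)
    (lam lamp : ℝ) (hlam : 0 < lam) (hlamp : 0 < lamp)
    (hrhop : lamp * (∫ ω, Hp ω ∂μ) < 1) :
    ∃! x : ℝ, x ∈ Set.Icc lam (lam + lamp) ∧
      x - lam - lamp + lamp * (∫ ω, Real.exp (-x * Hp ω) ∂μ) = 0 := by
  have hX0 : 0 ≤ᵐ[μ] Hp := ae_of_all _ hHpNonneg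
  have hIcc : Icc lam (lam + lamp) ⊆ Ici 0 := fun x hx ↦ hlam.le.trans hx.1
  set g : ℝ → ℝ := fun x ↦ x + lamp * mgf Hp μ (-x) - (lam + lamp)
  have hmono : StrictMonoOn g (Icc lam (lam + lamp)) := fun x hx y hy hxy ↦ sub_lt_sub_right
    (strictMonoOn_add_mul_mgf_neg hHpInt hX0 hlamp.le hrhop (hIcc hx) (hIcc hy) hxy) _
  have hcont : ContinuousOn g (Icc lam (lam + lamp)) := by
    have hf : ContinuousOn (fun x ↦ mgf Hp μ (-x)) (Icc lam (lam + lamp)) :=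
      (continuousOn_mgf_Iic hHpInt.aemeasurable hX0).comp continuousOn_neg
        fun x hx ↦ neg_nonpos.mpr (mem_Ici.mp (hIcc hx))
    exact (continuousOn_id.add (continuousOn_const.mul hf)).sub continuousOn_const
  have hg_lam : g lam ≤ 0 := by
    have := mgf_le_one_of_nonpos hX0 (neg_nonpos.mpr hlam.le)
    simp only [g]; nlinarith
  have hg_end : 0 ≤ g (lam + lamp) := by
    have : 0 ≤ mgf Hp μ (-(lam + lamp)) := mgf_nonneg
    simp only [g]; nlinarith
  obtain ⟨x, ⟨hx, hgx⟩, huniq⟩ :=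
    hmono.existsUnique_eq_of_mem_Icc (by linarith) hcont ⟨hg_lam, hg_end⟩
  refine ⟨x, ⟨hx, ?_⟩, fun y ⟨hy, hgy⟩ ↦ huniq y ⟨hy, ?_⟩⟩
  · simp only [g, mgf] at hgx; linarith
  · simp only [g, mgf]; linarith

/-- The equation `x - λ - λ⁺ + λ⁺ f(x) = 0` has a unique solution
`γ` in `[λ, λ + λ⁺]`, where `f` is the LST of a nonnegative random variable `H⁺`,
`λ, λ⁺ > 0` and `λ⁺ E[H⁺] < 1`. -/
theorem stmt2 {Ω : Type*} [MeasurableSpace Ω] (μ : Measure Ω) [IsProbabilityMeasure μ]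
    (Hp : Ω → ℝ) (hHpMeas : Measurable Hp) (hHpNonneg : ∀ ω, 0 ≤ Hp ω)
    (hHpInt : Integrable Hp μ)
    (lam lamp : ℝ) (hlam : 0 < lam) (hlamp : 0 < lamp)
    (hrhop : lamp * (∫ ω, Hp ω ∂μ) < 1) :
    ∃! x : ℝ, x ∈ Set.Icc lam (lam + lamp) ∧
      x - lam - lamp + lamp * (∫ ω, Real.exp (-x * Hp ω) ∂μ) = 0 :=
  stmt2_general μ Hp hHpNonneg hHpInt lam lamp hlam hlamp hrhop
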